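/- arXiv:2507.12926 — 2 statements merged into one kernel-verified Lean document; each statement's English description precedes it below -/
import Mathlib

section
/- For every real constant C > 1 there exists an integer D0 such that for every integer D ≥ D0 there exists ℓ0 such that the following holds for every integer ℓ ≥ ℓ0 with k = D²ℓ²: for every linear subspace X ⊆ ℝ^{k+1} of dimension r with 1 ≤ r ≤ Cℓ, if y is sampled from the uniform probability measure ℙ on S^k, then ℙ(‖π_X(y)‖ > α_C·√ℓ/(2√k)) ≤ (p_C/10)^{Cℓ}, where π_X is the orthogonal projection of ℝ^{k+1} onto X and ‖·‖ is the Euclidean norm. -/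
open MeasureTheory Real
open scoped ENNReal RealInnerProductSpace BigOperators

noncomputable section

/-- The ambient Euclidean space `ℝ^{k+1}`. -/
abbrev Amb (k : ℕ) := EuclideanSpace ℝ (Fin (k + 1))

/-- The surface measure on the unit sphere `S^k ⊆ ℝ^{k+1}`, as a measure on the
ambient space. -/
def sphereSurface (k : ℕ) : Measure (Amb k) :=
  ((volume : Measure (Amb k)).toSphere).map Subtype.val

/-- The uniform probability measure `ℙ` on the unit sphere `S^k ⊆ ℝ^{k+1}`
(normalized surface measure), as a measure on the ambient space. -/
def sphereUniform (k : ℕ) : Measure (Amb k) :=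
  (sphereSurface k Set.univ)⁻¹ • sphereSurface k

/-- `c` is the constant `c_{k,p}`: `c ≥ 0` and for a (fixed, arbitrary) unit vector `e`,
`ℙ(⟨x, e⟩ ≤ -c/√k) = p`. -/
def IsCkp (k : ℕ) (p c : ℝ) : Prop :=
  0 ≤ c ∧ ∀ e : Amb k, ‖e‖ = 1 →
    sphereUniform k {x | ⟪x, e⟫ ≤ -c / Real.sqrt k} = ENNReal.ofReal p

/-- `p` is the constant `p_C`: the unique `p ∈ (0,1/2)` with `C = log p / log (1-p)`. -/
def IsPC (C p : ℝ) : Prop :=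
  p ∈ Set.Ioo (0 : ℝ) (1 / 2) ∧ C = Real.log p / Real.log (1 - p)

/-- The constant `α_C`. -/
def alphaC (C pC : ℝ) : ℝ := max 1000 (20 * Real.sqrt (C * Real.log (10 / pC)))

/-! Let `t = α_C √ℓ / (2√k)`. A maximal `1/2`-separated subset `N` of the unit sphere of `X` is a
`1/2`-net with at most `5^r` points, and if `‖π_X y‖ > t` then `⟪y, w⟫ > t/2` for some `w ∈ N`.
So the event is covered by `5^r` spherical caps `{⟪y, w⟫ > t/2}`. The cone over such a cap lies in
the ball of radius `√(1 - t²/4)` around `(t/2) w`, so the cap has normalized measure at most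
`(1 - t²/4)^((k+1)/2) ≤ exp (-k t² / 8) = exp (-α_C² ℓ / 32)`, and `α_C² ≥ 400 C log (10/p_C)`
makes this beat `5^r ≤ 5^(Cℓ)`. -/

open Set Metric Module
open scoped NNReal Pointwise

section Net

variable {E : Type*} [NormedAddCommGroup E] [NormedSpace ℝ E] [FiniteDimensional ℝ E]

theorem Finset.card_le_of_subset_sphere_of_isSeparated {N : Finset E}
    (hN : (N : Set E) ⊆ sphere 0 1) (hsep : IsSeparated (1 / 2 : ℝ≥0) (N : Set E)) :
    N.card ≤ 5 ^ finrank ℝ E := by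
  classical
  have hinj : Function.Injective fun x : E => (2 : ℝ) • x := smul_right_injective E two_ne_zero
  rw [← Finset.card_image_of_injective N hinj]
  refine Besicovitch.card_le_of_separated _ ?_ ?_
  · simp only [Finset.mem_image]
    rintro _ ⟨c, hc, rfl⟩
    simp [norm_smul, mem_sphere_zero_iff_norm.1 (hN hc)]
  · simp only [Finset.mem_image]
    rintro _ ⟨c, hc, rfl⟩ _ ⟨d, hd, rfl⟩ hcd
    have hlt : (1 / 2 : ℝ) < dist c d := by
      have : ((1 / 2 : ℝ≥0) : ℝ≥0∞) < edist c d := hsep hc hd (fun h => hcd (by rw [h]))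
      rw [edist_nndist, ENNReal.coe_lt_coe, ← NNReal.coe_lt_coe, coe_nndist] at this
      simpa using this
    rw [← smul_sub, norm_smul, ← dist_eq_norm]
    norm_num
    linarith

theorem packingNumber_half_sphere_le :
    packingNumber (1 / 2) (sphere (0 : E) 1) ≤ 5 ^ finrank ℝ E := by
  simp only [packingNumber, iSup_le_iff]
  intro C hCs hsep
  by_contra! hlt
  obtain ⟨D, hDC, hD⟩ := Set.exists_subset_encard_eq (Order.add_one_le_of_lt hlt)
  have hDfin : D.Finite := Set.finite_of_encard_eq_coe hD
  have := Finset.card_le_of_subset_sphere_of_isSeparated (N := hDfin.toFinset)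
    (by simpa using hDC.trans hCs) (by simpa using hsep.subset hDC)
  rw [hDfin.encard_eq_coe_toFinset_card] at hD
  norm_cast at hD
  omega

theorem exists_finset_subset_sphere_isCover_half :
    ∃ N : Finset E, N.card ≤ 5 ^ finrank ℝ E ∧ (N : Set E) ⊆ sphere 0 1 ∧
      IsCover (1 / 2) (sphere (0 : E) 1) (N : Set E) := by
  have hfin : packingNumber (1 / 2) (sphere (0 : E) 1) ≠ ⊤ :=
    ne_top_of_le_ne_top (by simp) packingNumber_half_sphere_le
  have hNfin : (maximalSeparatedSet (1 / 2) (sphere (0 : E) 1)).Finite :=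
    Set.encard_ne_top_iff.1 (by rwa [encard_maximalSeparatedSet hfin])
  refine ⟨hNfin.toFinset, ?_, by simpa using maximalSeparatedSet_subset, by
    simpa using isCover_maximalSeparatedSet hfin⟩
  have := (encard_maximalSeparatedSet hfin).trans_le packingNumber_half_sphere_le
  rw [hNfin.encard_eq_coe_toFinset_card] at this
  exact_mod_cast this

end Net

section InnerProduct

variable {F : Type*} [NormedAddCommGroup F] [InnerProductSpace ℝ F]

theorem exists_mem_half_norm_le_inner {N : Set F} (hN : IsCover (1 / 2) (sphere (0 : F) 1) N)
    {v : F} (hv : v ≠ 0) : ∃ w ∈ N, ‖v‖ / 2 ≤ ⟪v, w⟫ := by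
  have hv' : 0 < ‖v‖ := norm_pos_iff.2 hv
  obtain ⟨w, hwN, hw⟩ := hN (x := ‖v‖⁻¹ • v) (by simp [norm_smul, hv'.ne'])
  refine ⟨w, hwN, ?_⟩
  have hdist : ‖‖v‖⁻¹ • v - w‖ ≤ 1 / 2 := by
    have hw' : edist (‖v‖⁻¹ • v) w ≤ (1 / 2 : ℝ≥0) := hw
    rw [edist_nndist, ENNReal.coe_le_coe, ← NNReal.coe_le_coe, coe_nndist, dist_eq_norm] at hw'
    simpa using hw'
  have hcs : ⟪v, ‖v‖⁻¹ • v - w⟫ ≤ ‖v‖ * ‖‖v‖⁻¹ • v - w‖ := real_inner_le_norm _ _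
  have hself : ⟪v, ‖v‖⁻¹ • v⟫ = ‖v‖ := by
    rw [real_inner_smul_right, real_inner_self_eq_norm_sq]
    field_simp
  rw [inner_sub_right, hself] at hcs
  nlinarith

theorem Submodule.exists_mem_lt_inner_of_lt_norm_orthogonalProjectionOnto (K : Submodule ℝ F)
    [K.HasOrthogonalProjection] {N : Set K} (hN : IsCover (1 / 2) (sphere (0 : K) 1) N)
    {t : ℝ} (ht : 0 ≤ t) {y : F} (hy : t < ‖K.orthogonalProjectionOnto y‖) :
    ∃ w ∈ N, t / 2 < ⟪y, (w : F)⟫ := by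
  obtain ⟨w, hwN, hw⟩ := exists_mem_half_norm_le_inner hN (norm_pos_iff.1 (ht.trans_lt hy))
  refine ⟨w, hwN, ?_⟩
  rw [← K.inner_orthogonalProjectionOnto_eq_of_mem_right]
  linarith

end InnerProduct

section Cap

variable {E : Type*} [NormedAddCommGroup E] [InnerProductSpace ℝ E]

theorem smul_mem_closedBall_of_lt_inner {e y : E} (he : ‖e‖ = 1) (hy : ‖y‖ = 1) {s a : ℝ}
    (hs0 : 0 ≤ s) (hs : 2 * s ^ 2 ≤ 1) (hye : s < ⟪y, e⟫) (ha0 : 0 ≤ a) (ha1 : a ≤ 1) :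
    a • y ∈ closedBall (s • e) √(1 - s ^ 2) := by
  rw [mem_closedBall, dist_eq_norm]
  refine Real.le_sqrt_of_sq_le ?_
  rw [@norm_sub_sq_real, norm_smul, norm_smul, real_inner_smul_left, real_inner_smul_right, he,
    hy, Real.norm_of_nonneg ha0, Real.norm_of_nonneg hs0]
  -- `‖a • y - s • e‖² ≤ a² - 2as² + s²`, and `(a - 1)(a + 1 - 2s²) ≤ 0` bounds this by `1 - s²`.
  nlinarith [mul_le_mul_of_nonneg_left hye.le (mul_nonneg ha0 hs0)]

variable [FiniteDimensional ℝ E] [MeasurableSpace E] [BorelSpace E]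

theorem MeasureTheory.Measure.toSphere_setOf_lt_inner_le (μ : Measure E) [μ.IsAddHaarMeasure]
    {e : E} (he : ‖e‖ = 1) {s : ℝ} (hs0 : 0 ≤ s) (hs : 2 * s ^ 2 ≤ 1) :
    μ.toSphere {x | s < ⟪(x : E), e⟫} ≤
      ENNReal.ofReal (√(1 - s ^ 2) ^ finrank ℝ E) * μ.toSphere univ := by
  have hmeas : MeasurableSet {x : sphere (0 : E) 1 | s < ⟪(x : E), e⟫} :=
    measurableSet_lt measurable_const (by fun_prop)
  rw [μ.toSphere_apply' hmeas, μ.toSphere_apply_univ]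
  calc (finrank ℝ E : ℝ≥0∞) *
        μ (Ioo (0 : ℝ) 1 • (Subtype.val '' {x : sphere (0 : E) 1 | s < ⟪(x : E), e⟫}))
      ≤ finrank ℝ E * μ (closedBall (s • e) √(1 - s ^ 2)) := by
        gcongr
        intro z hz
        obtain ⟨a, ⟨ha0, ha1⟩, _, ⟨y, hy, rfl⟩, rfl⟩ := Set.mem_smul.1 hz
        exact smul_mem_closedBall_of_lt_inner he (norm_eq_of_mem_sphere y) hs0 hs hy ha0.le ha1.le
    _ = ENNReal.ofReal (√(1 - s ^ 2) ^ finrank ℝ E) * (finrank ℝ E * μ (ball 0 1)) := by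
        rw [Measure.addHaar_closedBall μ _ (Real.sqrt_nonneg _), mul_left_comm]

end Cap

theorem sphereUniform_apply {k : ℕ} {A : Set (Amb k)} (hA : MeasurableSet A) :
    sphereUniform k A = ((volume : Measure (Amb k)).toSphere univ)⁻¹ *
      (volume : Measure (Amb k)).toSphere (Subtype.val ⁻¹' A) := by
  rw [sphereUniform, Measure.smul_apply, smul_eq_mul, sphereSurface,
    Measure.map_apply measurable_subtype_coe hA,
    Measure.map_apply measurable_subtype_coe MeasurableSet.univ, preimage_univ]

theorem sphereUniform_setOf_lt_inner_le {k : ℕ} {e : Amb k} (he : ‖e‖ = 1) {s : ℝ} (hs0 : 0 ≤ s)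
    (hs : 2 * s ^ 2 ≤ 1) :
    sphereUniform k {x | s < ⟪x, e⟫} ≤ ENNReal.ofReal (√(1 - s ^ 2) ^ (k + 1)) := by
  have : Nonempty (sphere (0 : Amb k) 1) :=
    (NormedSpace.sphere_nonempty.2 zero_le_one).to_subtype
  have hpos : (volume : Measure (Amb k)).toSphere univ ≠ 0 :=
    (isOpen_univ.measure_pos _ univ_nonempty).ne'
  rw [sphereUniform_apply (measurableSet_lt measurable_const (by fun_prop))]
  calc _ ≤ ((volume : Measure (Amb k)).toSphere univ)⁻¹ *
        (ENNReal.ofReal (√(1 - s ^ 2) ^ (k + 1)) * (volume : Measure (Amb k)).toSphere univ) := by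
        gcongr
        simpa using (volume : Measure (Amb k)).toSphere_setOf_lt_inner_le he hs0 hs
    _ = ENNReal.ofReal (√(1 - s ^ 2) ^ (k + 1)) := by
        rw [mul_comm, mul_assoc, ENNReal.mul_inv_cancel hpos (measure_ne_top _ _), mul_one]

theorem sphereUniform_setOf_lt_norm_orthogonalProjectionOnto_le {k : ℕ}
    (X : Submodule ℝ (Amb k)) {t : ℝ} (ht0 : 0 ≤ t) (ht : t ^ 2 ≤ 2) :
    sphereUniform k {y | t < ‖(X.orthogonalProjectionOnto y : Amb k)‖} ≤
      ENNReal.ofReal (5 ^ finrank ℝ X * √(1 - (t / 2) ^ 2) ^ (k + 1)) := by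
  obtain ⟨N, hcard, hNs, hN⟩ := exists_finset_subset_sphere_isCover_half (E := X)
  have hsub : {y | t < ‖(X.orthogonalProjectionOnto y : Amb k)‖} ⊆
      ⋃ w ∈ N, {x | t / 2 < ⟪x, (w : Amb k)⟫} := fun y hy => by
    obtain ⟨w, hw, hlt⟩ :=
      X.exists_mem_lt_inner_of_lt_norm_orthogonalProjectionOnto hN ht0 hy
    exact mem_biUnion hw hlt
  calc _ ≤ sphereUniform k (⋃ w ∈ N, {x | t / 2 < ⟪x, (w : Amb k)⟫}) := measure_mono hsub
    _ ≤ ∑ w ∈ N, sphereUniform k {x | t / 2 < ⟪x, (w : Amb k)⟫} :=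
        measure_biUnion_finset_le _ _
    _ ≤ ∑ _w ∈ N, ENNReal.ofReal (√(1 - (t / 2) ^ 2) ^ (k + 1)) :=
        Finset.sum_le_sum fun w hw => sphereUniform_setOf_lt_inner_le
          (by simpa using hNs hw) (by positivity) (by nlinarith)
    _ ≤ _ := by
        rw [Finset.sum_const, nsmul_eq_mul, ENNReal.ofReal_mul (by positivity)]
        gcongr
        rw [ENNReal.ofReal_pow (by norm_num), ENNReal.ofReal_ofNat]
        exact_mod_cast hcard

theorem Real.sqrt_one_sub_pow_le_exp (x : ℝ) (n : ℕ) : √(1 - x) ^ n ≤ exp (-(n * x / 2)) := by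
  have h : √(1 - x) ≤ exp (-(x / 2)) := by
    refine Real.sqrt_le_iff.2 ⟨(exp_pos _).le, ?_⟩
    rw [← exp_nat_mul]
    ring_nf
    exact one_sub_le_exp_neg x
  calc √(1 - x) ^ n ≤ exp (-(x / 2)) ^ n := pow_le_pow_left₀ (Real.sqrt_nonneg _) h n
    _ = exp (-(n * x / 2)) := by rw [← exp_nat_mul]; ring_nf

theorem five_pow_mul_exp_le_rpow {C p α ℓ : ℝ} {r : ℕ} (hC : 0 ≤ C) (hℓ : 0 ≤ ℓ) (hp0 : 0 < p)
    (hp : p ≤ 2) (hr : (r : ℝ) ≤ C * ℓ) (hα : 400 * (C * log (10 / p)) ≤ α ^ 2) :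
    5 ^ r * exp (-(α ^ 2 * ℓ / 32)) ≤ (p / 10) ^ (C * ℓ) := by
  have hL5 : log 5 ≤ log (10 / p) :=
    Real.log_le_log (by norm_num) (by rw [le_div_iff₀ hp0]; linarith)
  have hL : 0 ≤ log (10 / p) := (Real.log_nonneg (by norm_num)).trans hL5
  have h5 : (5 : ℝ) ^ r ≤ exp (C * ℓ * log (10 / p)) := by
    rw [← Real.exp_log (by norm_num : (0 : ℝ) < 5), ← exp_nat_mul]
    gcongr
  have hrhs : (p / 10) ^ (C * ℓ) = exp (-(C * ℓ * log (10 / p))) := by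
    rw [Real.rpow_def_of_pos (by positivity), show p / 10 = (10 / p)⁻¹ by field_simp,
      Real.log_inv, neg_mul, mul_comm]
  rw [hrhs]
  calc 5 ^ r * exp (-(α ^ 2 * ℓ / 32))
      ≤ exp (C * ℓ * log (10 / p)) * exp (-(α ^ 2 * ℓ / 32)) := by gcongr
    _ = exp (C * ℓ * log (10 / p) - α ^ 2 * ℓ / 32) := by rw [← exp_add]; ring_nf
    _ ≤ exp (-(C * ℓ * log (10 / p))) := by
        gcongr
        nlinarith [mul_le_mul_of_nonneg_right hα hℓ, mul_nonneg (mul_nonneg hC hℓ) hL]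

theorem sq_alphaC_ge {C p : ℝ} (hC : 0 ≤ C) (hp0 : 0 < p) (hp : p ≤ 10) :
    400 * (C * log (10 / p)) ≤ alphaC C p ^ 2 := by
  have hCp : 0 ≤ C * log (10 / p) :=
    mul_nonneg hC (Real.log_nonneg (by rw [le_div_iff₀ hp0]; linarith))
  calc 400 * (C * log (10 / p)) = (20 * √(C * log (10 / p))) ^ 2 := by
        rw [mul_pow, Real.sq_sqrt hCp]; norm_num
    _ ≤ alphaC C p ^ 2 := pow_le_pow_left₀ (by positivity) (le_max_right _ _) 2

theorem mul_sq_mul_sqrt_div_two_mul_sqrt {k : ℕ} (hk : 0 < k) (α ℓ : ℝ) (hℓ : 0 ≤ ℓ) :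
    k * (α * √ℓ / (2 * √k)) ^ 2 = α ^ 2 * ℓ / 4 := by
  rw [div_pow, mul_pow, mul_pow, Real.sq_sqrt (Nat.cast_nonneg _), Real.sq_sqrt hℓ]
  field_simp
  ring

theorem volume_nonperfect (C : ℝ) (hC : 1 < C) (pC : ℝ) (hpC : IsPC C pC) :
    ∃ D0 : ℕ, ∀ D : ℕ, D0 ≤ D → ∃ ℓ0 : ℕ, ∀ ℓ : ℕ, ℓ0 ≤ ℓ →
      ∀ k : ℕ, k = D ^ 2 * ℓ ^ 2 →
        ∀ r : ℕ, 1 ≤ r → (r : ℝ) ≤ C * ℓ →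
          ∀ X : Submodule ℝ (Amb k), Module.finrank ℝ X = r →
            (sphereUniform k
                {y | alphaC C pC * Real.sqrt ℓ / (2 * Real.sqrt k) <
                  ‖(X.orthogonalProjection y : Amb k)‖}).toReal
              ≤ (pC / 10) ^ (C * ℓ) := by
  obtain ⟨⟨hp0, hp⟩, -⟩ := hpC
  have hα : 1000 ≤ alphaC C pC := le_max_left _ _
  refine ⟨1, fun D hD => ⟨⌈alphaC C pC ^ 2⌉₊, fun ℓ hℓ k hk r _ hr X hX => ?_⟩⟩
  have hαℓ : alphaC C pC ^ 2 ≤ ℓ := Nat.ceil_le.1 hℓ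
  have hD1 : (1 : ℝ) ≤ D := by exact_mod_cast hD
  have hk' : (k : ℝ) = D ^ 2 * ℓ ^ 2 := by rw [hk]; push_cast; ring
  have hℓ1 : (1 : ℝ) ≤ ℓ := by nlinarith
  have hk0 : (0 : ℝ) < k := by rw [hk']; positivity
  set t := alphaC C pC * √ℓ / (2 * √k)
  have hkt : (k : ℝ) * t ^ 2 = alphaC C pC ^ 2 * ℓ / 4 :=
    mul_sq_mul_sqrt_div_two_mul_sqrt (by exact_mod_cast hk0) _ _ (by positivity)
  have ht : t ^ 2 ≤ 2 := by
    refine le_of_mul_le_mul_left ?_ hk0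
    rw [hkt, hk']
    nlinarith [mul_le_mul_of_nonneg_right hαℓ (by positivity : (0 : ℝ) ≤ ℓ),
      le_mul_of_one_le_left (by positivity : (0 : ℝ) ≤ ℓ ^ 2) (one_le_pow₀ hD1 (n := 2))]
  refine ENNReal.toReal_le_of_le_ofReal (by positivity) <|
    (sphereUniform_setOf_lt_norm_orthogonalProjectionOnto_le X (by positivity) ht).trans <|
    ENNReal.ofReal_le_ofReal ?_
  rw [hX]
  calc 5 ^ r * √(1 - (t / 2) ^ 2) ^ (k + 1)
      ≤ 5 ^ r * exp (-((k + 1 : ℕ) * (t / 2) ^ 2 / 2)) := by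
        gcongr; exact Real.sqrt_one_sub_pow_le_exp _ _
    _ ≤ 5 ^ r * exp (-(alphaC C pC ^ 2 * ℓ / 32)) := by
        refine mul_le_mul_of_nonneg_left (exp_le_exp.2 ?_) (by positivity)
        push_cast
        nlinarith
    _ ≤ (pC / 10) ^ (C * ℓ) := five_pow_mul_exp_le_rpow (by linarith) (by positivity) hp0
        (by linarith) hr (sq_alphaC_ge (by linarith) hp0 (by linarith))
end
end

section
/- Fix a real constant C > 1. There exist a constant K > 0 and an integer D0 such that for every integer D ≥ D0 there exists ℓ0 such that the following holds for all integers ℓ ≥ ℓ0, k = D²ℓ², 1 ≤ r ≤ Cℓ, and every perfect sequence x[r] = (x_1, …, x_r) in S^k: with v_1, …, v_r the columns of V = X(XᵀX)^{−1}, e_1, …, e_r the associated orthonormal basis, and V_r(i) = span(v_j : j ∈ [r]∖{i}), one has |⟨v_i, e_i⟩ − 1| ≤ K·ℓ/k and ‖π_{V_r(i)}(e_i)‖ ≤ K·√ℓ/√k for every i ∈ [r]. -/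
open MeasureTheory Real
open scoped ENNReal RealInnerProductSpace BigOperators

noncomputable section

/-- A sequence of points of the sphere is perfect (with threshold `b = α_C √ℓ/√k`):
for each `i`, the orthogonal projection of `x i` onto the span of the previous points
has norm at most `b`. -/
def IsPerfect {k r : ℕ} (b : ℝ) (x : Fin r → Amb k) : Prop :=
  ∀ i : Fin r,
    ‖(Submodule.orthogonalProjectionOnto (Submodule.span ℝ (x '' {j | j < i})) (x i) : Amb k)‖ ≤ b

/-- The red common neighbourhood `N(x[r]) ⊆ S^k`. -/
def Nred {k r : ℕ} (c : ℝ) (x : Fin r → Amb k) : Set (Amb k) :=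
  {z | ‖z‖ = 1 ∧ ∀ i, ⟪x i, z⟫ ≤ -c / Real.sqrt k}

/-- The blue common neighbourhood `N̄(x[r]) ⊆ S^k`. -/
def Nblue {k r : ℕ} (c : ℝ) (x : Fin r → Amb k) : Set (Amb k) :=
  {z | ‖z‖ = 1 ∧ ∀ i, -c / Real.sqrt k < ⟪x i, z⟫}

/-- The perfect red neighbourhood `N_per(x[r])`. -/
def NredPer {k r : ℕ} (b c : ℝ) (x : Fin r → Amb k) : Set (Amb k) :=
  {z ∈ Nred c x | IsPerfect b (Fin.snoc x z)}

/-- The perfect blue neighbourhood `N̄_per(x[r])`. -/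
def NbluePer {k r : ℕ} (b c : ℝ) (x : Fin r → Amb k) : Set (Amb k) :=
  {z ∈ Nblue c x | IsPerfect b (Fin.snoc x z)}

/-- The normalized restriction of the uniform sphere measure to a set `S`. -/
def condSphere {k : ℕ} (S : Set (Amb k)) : Measure (Amb k) :=
  (sphereUniform k S)⁻¹ • (sphereUniform k).restrict S

/-- Orthogonal projection `π_{[r]}` onto the span of the sequence `x`. -/
def projSpan {k r : ℕ} (x : Fin r → Amb k) (y : Amb k) : Amb k :=
  (Submodule.orthogonalProjectionOnto (Submodule.span ℝ (Set.range x)) y : Amb k)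

/-
Write `t = ⟪x i, e i⟫`, `W = span (x j : j < i)` and `b = α √ℓ / √k`. As `e i` is the unit
vector of `span {x i} ⊔ W` orthogonal to `W`, the projection of `x i` onto `W` is
`x i - t • e i`, so perfection gives `1 - t² ≤ b²`. Since `v i ⊥ W` and `⟪v i, x i⟫ = 1`, we get
`⟪v i, e i⟫ = 1 / t`, which is within `2 b²` of `1`. Dually, `e i - t • x i` lies in `span x` and
is orthogonal to `x i`, hence lies in `V = span (v j : j ≠ i)`, while `t • x i ⊥ V`; so the
projection of `e i` onto `V` is `e i - t • x i`, of norm `√(1 - t²) ≤ b`. Taking `D ≥ 1` and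
`ℓ ≥ 2 α²` makes `b² ≤ 1 / 2`, and `K = 2 α²` works.
-/

open Submodule

theorem abs_inv_sub_one_le_two_mul {t β : ℝ} (ht0 : 0 < t) (ht1 : t ≤ 1) (htβ : 1 - t ^ 2 ≤ β)
    (hβ : β ≤ 1 / 2) : |t⁻¹ - 1| ≤ 2 * β := by
  have ht_half : 1 / 2 ≤ t := by nlinarith
  rw [abs_of_nonneg (sub_nonneg.2 (one_le_inv₀ ht0 |>.2 ht1)), inv_eq_one_div, div_sub_one ht0.ne',
    div_le_iff₀ ht0]
  nlinarith

theorem sq_mul_sqrt_div_sqrt_le_half {α : ℝ} {ℓ k : ℕ} (hℓ : 2 * α ^ 2 ≤ ℓ) (hk : ℓ ^ 2 ≤ k) :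
    (α * √ℓ / √k) ^ 2 ≤ 1 / 2 := by
  rw [div_pow, mul_pow, Real.sq_sqrt (Nat.cast_nonneg _), Real.sq_sqrt (Nat.cast_nonneg _)]
  rcases (Nat.cast_nonneg (α := ℝ) k).eq_or_lt with hk0 | hk0
  · simp [← hk0]
  · rw [div_le_iff₀ hk0]
    have : (ℓ : ℝ) ^ 2 ≤ k := by exact_mod_cast hk
    nlinarith [(Nat.cast_nonneg (α := ℝ) ℓ)]

section InnerProductSpace

variable {E : Type*} [NormedAddCommGroup E] [InnerProductSpace ℝ E]

theorem norm_sub_inner_smul_sq {u : E} (hu : ‖u‖ = 1) (y : E) :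
    ‖y - ⟪u, y⟫ • u‖ ^ 2 = ‖y‖ ^ 2 - ⟪u, y⟫ ^ 2 := by
  rw [norm_sub_sq_real, real_inner_smul_right, norm_smul, hu, mul_one, Real.norm_eq_abs, sq_abs,
    real_inner_comm]
  ring

theorem Submodule.mem_orthogonal_span_of_forall_inner {s : Set E} {y : E}
    (h : ∀ u ∈ s, ⟪u, y⟫ = 0) : y ∈ (span ℝ s)ᗮ := by
  have hs : span ℝ s ≤ (ℝ ∙ y)ᗮ :=
    span_le.2 fun u hu => mem_orthogonal_singleton_iff_inner_left.2 (h u hu)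
  exact fun u hu => inner_eq_zero_symm.1 (mem_orthogonal_singleton_iff_inner_right.1 (hs hu))

theorem Submodule.sub_inner_smul_mem_of_mem_sup {W : Submodule ℝ E} {x e : E} (he : ‖e‖ = 1)
    (heW : e ∈ Wᗮ) (hmem : e ∈ (ℝ ∙ x) ⊔ W) : x - ⟪e, x⟫ • e ∈ W := by
  obtain ⟨_, hy, w, hw, rfl⟩ := mem_sup.1 hmem
  obtain ⟨a, rfl⟩ := mem_span_singleton.1 hy
  set e := a • x + w with he_def
  have hat : a * ⟪e, x⟫ = 1 := by
    have hee : ⟪e, e⟫ = a * ⟪e, x⟫ + ⟪e, w⟫ := by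
      rw [he_def, inner_add_right, real_inner_smul_right]
    rwa [real_inner_self_eq_norm_sq, he, inner_left_of_mem_orthogonal hw heW, add_zero,
      one_pow, eq_comm] at hee
  have hsub : x - ⟪e, x⟫ • e = (-⟪e, x⟫) • w := by
    rw [he_def, smul_add, smul_smul, mul_comm, hat, one_smul]
    module
  rw [hsub]
  exact W.smul_mem _ hw

theorem Submodule.starProjection_eq_sub_inner_smul {W : Submodule ℝ E}
    [W.HasOrthogonalProjection] {x e : E} (he : ‖e‖ = 1) (heW : e ∈ Wᗮ)
    (hmem : e ∈ (ℝ ∙ x) ⊔ W) : W.starProjection x = x - ⟪e, x⟫ • e :=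
  eq_starProjection_of_mem_orthogonal (sub_inner_smul_mem_of_mem_sup he heW hmem)
    (by simpa using Wᗮ.smul_mem ⟪e, x⟫ heW)

section Biorthogonal

variable {ι : Type*} [DecidableEq ι] {x v : ι → E}

theorem dual_mem_orthogonal_span_image (hvx : ∀ i j, ⟪v i, x j⟫ = if i = j then 1 else 0)
    {s : Set ι} {i : ι} (hi : i ∉ s) : v i ∈ (span ℝ (x '' s))ᗮ :=
  mem_orthogonal_span_of_forall_inner <| by
    rintro _ ⟨j, hj, rfl⟩
    rw [real_inner_comm, hvx, if_neg (ne_of_mem_of_not_mem hj hi).symm]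

theorem mem_orthogonal_span_dual_image (hvx : ∀ i j, ⟪v i, x j⟫ = if i = j then 1 else 0)
    {s : Set ι} {i : ι} (hi : i ∉ s) : x i ∈ (span ℝ (v '' s))ᗮ :=
  mem_orthogonal_span_of_forall_inner <| by
    rintro _ ⟨j, hj, rfl⟩
    rw [hvx, if_neg (ne_of_mem_of_not_mem hj hi)]

theorem eq_sum_inner_smul_dual [Fintype ι] (hvx : ∀ i j, ⟪v i, x j⟫ = if i = j then 1 else 0)
    (hv : ∀ i, v i ∈ span ℝ (Set.range x)) {u : E} (hu : u ∈ span ℝ (Set.range x)) :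
    u = ∑ j, ⟪u, x j⟫ • v j := by
  set d := u - ∑ j, ⟪u, x j⟫ • v j
  have hd : d ∈ span ℝ (Set.range x) :=
    sub_mem hu (sum_mem fun j _ => smul_mem _ _ (hv j))
  have hd' : d ∈ (span ℝ (Set.range x))ᗮ := mem_orthogonal_span_of_forall_inner <| by
    rintro _ ⟨j, rfl⟩
    rw [real_inner_comm, inner_sub_left, sum_inner]
    simp [real_inner_smul_left, hvx]
  exact sub_eq_zero.1 (inner_self_eq_zero.1 (inner_right_of_mem_orthogonal hd hd'))

theorem mem_span_dual_image_ne [Fintype ι] (hvx : ∀ i j, ⟪v i, x j⟫ = if i = j then 1 else 0)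
    (hv : ∀ i, v i ∈ span ℝ (Set.range x)) {u : E} (hu : u ∈ span ℝ (Set.range x)) {i : ι}
    (hui : ⟪u, x i⟫ = 0) : u ∈ span ℝ (v '' {j | j ≠ i}) := by
  rw [eq_sum_inner_smul_dual hvx hv hu]
  refine sum_mem fun j _ => ?_
  rcases eq_or_ne j i with rfl | hj
  · simp [hui]
  · exact smul_mem _ _ (subset_span ⟨j, hj, rfl⟩)

theorem starProjection_span_dual_image_ne [Fintype ι]
    (hvx : ∀ i j, ⟪v i, x j⟫ = if i = j then 1 else 0) (hv : ∀ i, v i ∈ span ℝ (Set.range x))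
    {i : ι} [(span ℝ (v '' {j | j ≠ i})).HasOrthogonalProjection] (hx : ‖x i‖ = 1) {y : E}
    (hy : y ∈ span ℝ (Set.range x)) :
    (span ℝ (v '' {j | j ≠ i})).starProjection y = y - ⟪x i, y⟫ • x i := by
  refine eq_starProjection_of_mem_orthogonal (mem_span_dual_image_ne hvx hv ?_ ?_) ?_
  · exact sub_mem hy (smul_mem _ _ (subset_span (Set.mem_range_self i)))
  · rw [inner_sub_left, real_inner_smul_left, real_inner_self_eq_norm_sq, hx, real_inner_comm]
    ring
  · simpa using smul_mem _ ⟪x i, y⟫ (mem_orthogonal_span_dual_image hvx (i := i) (by simp))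

end Biorthogonal

section GramSchmidt

variable {ι : Type*} [LinearOrder ι] {x : ι → E} {i : ι} {e : E}

theorem mem_orthogonal_span_image_lt (horth : ∀ j < i, ⟪x j, e⟫ = 0) :
    e ∈ (span ℝ (x '' {j | j < i}))ᗮ :=
  mem_orthogonal_span_of_forall_inner <| by
    rintro _ ⟨j, hj, rfl⟩
    exact horth j hj

theorem mem_span_singleton_sup_span_image_lt (hmem : e ∈ span ℝ (x '' {j | j ≤ i})) :
    e ∈ (ℝ ∙ x i) ⊔ span ℝ (x '' {j | j < i}) := by
  rw [← span_insert, ← Set.image_insert_eq]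
  exact Set.Iio_insert (a := i) ▸ hmem

theorem sub_inner_smul_mem_span_image_lt (he : ‖e‖ = 1) (horth : ∀ j < i, ⟪x j, e⟫ = 0)
    (hmem : e ∈ span ℝ (x '' {j | j ≤ i})) :
    x i - ⟪x i, e⟫ • e ∈ span ℝ (x '' {j | j < i}) := by
  rw [real_inner_comm]
  exact sub_inner_smul_mem_of_mem_sup he (mem_orthogonal_span_image_lt horth)
    (mem_span_singleton_sup_span_image_lt hmem)

theorem starProjection_span_image_lt [(span ℝ (x '' {j | j < i})).HasOrthogonalProjection]
    (he : ‖e‖ = 1) (horth : ∀ j < i, ⟪x j, e⟫ = 0) (hmem : e ∈ span ℝ (x '' {j | j ≤ i})) :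
    (span ℝ (x '' {j | j < i})).starProjection (x i) = x i - ⟪x i, e⟫ • e := by
  rw [real_inner_comm]
  exact starProjection_eq_sub_inner_smul he (mem_orthogonal_span_image_lt horth)
    (mem_span_singleton_sup_span_image_lt hmem)

theorem norm_starProjection_span_image_lt_sq
    [(span ℝ (x '' {j | j < i})).HasOrthogonalProjection] (he : ‖e‖ = 1)
    (horth : ∀ j < i, ⟪x j, e⟫ = 0) (hmem : e ∈ span ℝ (x '' {j | j ≤ i})) :
    ‖(span ℝ (x '' {j | j < i})).starProjection (x i)‖ ^ 2 = ‖x i‖ ^ 2 - ⟪x i, e⟫ ^ 2 := by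
  rw [starProjection_span_image_lt he horth hmem, real_inner_comm, norm_sub_inner_smul_sq he]

end GramSchmidt

section DualGramSchmidt

variable {ι : Type*} [LinearOrder ι] [DecidableEq ι] {x v : ι → E} {i : ι} {e : E}

theorem inner_mul_inner_dual_eq_one (hvx : ∀ i j, ⟪v i, x j⟫ = if i = j then 1 else 0)
    (he : ‖e‖ = 1) (horth : ∀ j < i, ⟪x j, e⟫ = 0) (hmem : e ∈ span ℝ (x '' {j | j ≤ i})) :
    ⟪x i, e⟫ * ⟪v i, e⟫ = 1 := by
  have h := inner_right_of_mem_orthogonal (sub_inner_smul_mem_span_image_lt he horth hmem)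
    (dual_mem_orthogonal_span_image hvx (s := {j | j < i}) (lt_irrefl i))
  rw [inner_sub_left, real_inner_smul_left, real_inner_comm (v i), hvx, if_pos rfl,
    real_inner_comm (v i)] at h
  linarith

theorem abs_inner_dual_sub_one_le [(span ℝ (x '' {j | j < i})).HasOrthogonalProjection]
    (hvx : ∀ i j, ⟪v i, x j⟫ = if i = j then 1 else 0) (hx : ‖x i‖ = 1) (he : ‖e‖ = 1)
    (horth : ∀ j < i, ⟪x j, e⟫ = 0) (hmem : e ∈ span ℝ (x '' {j | j ≤ i}))
    (hpos : 0 < ⟪x i, e⟫) {b : ℝ}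
    (hperf : ‖(span ℝ (x '' {j | j < i})).starProjection (x i)‖ ≤ b) (hb : b ^ 2 ≤ 1 / 2) :
    |⟪v i, e⟫ - 1| ≤ 2 * b ^ 2 := by
  have hle_one : ⟪x i, e⟫ ≤ 1 := by simpa [hx, he] using real_inner_le_norm (x i) e
  have hsq : 1 - ⟪x i, e⟫ ^ 2 ≤ b ^ 2 := by
    rw [← one_pow 2, ← hx, ← norm_starProjection_span_image_lt_sq he horth hmem]
    exact pow_le_pow_left₀ (norm_nonneg _) hperf 2
  rw [eq_inv_of_mul_eq_one_right (inner_mul_inner_dual_eq_one hvx he horth hmem)]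
  exact abs_inv_sub_one_le_two_mul hpos hle_one hsq hb

theorem norm_starProjection_span_dual_image_ne [Fintype ι]
    [(span ℝ (x '' {j | j < i})).HasOrthogonalProjection]
    [(span ℝ (v '' {j | j ≠ i})).HasOrthogonalProjection]
    (hvx : ∀ i j, ⟪v i, x j⟫ = if i = j then 1 else 0) (hv : ∀ i, v i ∈ span ℝ (Set.range x))
    (hx : ‖x i‖ = 1) (he : ‖e‖ = 1) (horth : ∀ j < i, ⟪x j, e⟫ = 0)
    (hmem : e ∈ span ℝ (x '' {j | j ≤ i})) :
    ‖(span ℝ (v '' {j | j ≠ i})).starProjection e‖ =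
      ‖(span ℝ (x '' {j | j < i})).starProjection (x i)‖ := by
  refine (sq_eq_sq₀ (norm_nonneg _) (norm_nonneg _)).1 ?_
  rw [norm_starProjection_span_image_lt_sq he horth hmem,
    starProjection_span_dual_image_ne hvx hv hx (span_mono (Set.image_subset_range _ _) hmem),
    norm_sub_inner_smul_sq hx, he, hx]

end DualGramSchmidt

end InnerProductSpace

theorem dist_e_v_general (C : ℝ) (pC : ℝ) :
    ∃ K : ℝ, 0 < K ∧ ∃ D0 : ℕ, ∀ D : ℕ, D0 ≤ D → ∃ ℓ0 : ℕ, ∀ ℓ : ℕ, ℓ0 ≤ ℓ →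
      ∀ k : ℕ, k = D ^ 2 * ℓ ^ 2 →
        ∀ r : ℕ, 1 ≤ r → (r : ℝ) ≤ C * ℓ →
          ∀ x : Fin r → Amb k, (∀ i, ‖x i‖ = 1) →
            IsPerfect (alphaC C pC * Real.sqrt ℓ / Real.sqrt k) x →
            ∀ v : Fin r → Amb k,
              (∀ i, v i ∈ Submodule.span ℝ (Set.range x)) →
              (∀ i j, ⟪v i, x j⟫ = if i = j then (1 : ℝ) else 0) →
              ∀ e : Fin r → Amb k,
                (∀ i, e i ∈ Submodule.span ℝ (x '' {j | j ≤ i})) →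
                (∀ i j, j < i → ⟪x j, e i⟫ = 0) →
                (∀ i, ‖e i‖ = 1) →
                (∀ i, 0 < ⟪x i, e i⟫) →
                ∀ i, |⟪v i, e i⟫ - 1| ≤ K * ℓ / k ∧
                  ‖(Submodule.orthogonalProjectionOnto
                      (Submodule.span ℝ (v '' {j | j ≠ i})) (e i) : Amb k)‖
                    ≤ K * Real.sqrt ℓ / Real.sqrt k := by
  set α := alphaC C pC
  have hα : 1000 ≤ α := le_max_left _ _
  refine ⟨2 * α ^ 2, by positivity, 1, fun D hD => ⟨⌈2 * α ^ 2⌉₊,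
    fun ℓ hℓ k hk r _ _ x hx hperf v hv hvx e hmem horth he hpos i => ?_⟩⟩
  have hb : (α * √ℓ / √k) ^ 2 ≤ 1 / 2 := by
    refine sq_mul_sqrt_div_sqrt_le_half (Nat.ceil_le.1 hℓ) ?_
    rw [hk]
    exact Nat.le_mul_of_pos_left _ (pow_pos hD 2)
  constructor
  · calc |⟪v i, e i⟫ - 1| ≤ 2 * (α * √ℓ / √k) ^ 2 :=
          abs_inner_dual_sub_one_le hvx (hx i) (he i) (horth i) (hmem i) (hpos i) (hperf i) hb
      _ = 2 * α ^ 2 * ℓ / k := by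
        rw [div_pow, mul_pow, Real.sq_sqrt (Nat.cast_nonneg _), Real.sq_sqrt (Nat.cast_nonneg _)]
        ring
  · calc _ = ‖(span ℝ (x '' {j | j < i})).starProjection (x i)‖ :=
          norm_starProjection_span_dual_image_ne hvx hv (hx i) (he i) (horth i) (hmem i)
      _ ≤ α * √ℓ / √k := hperf i
      _ ≤ 2 * α ^ 2 * √ℓ / √k := by gcongr; nlinarith

theorem dist_e_v (C : ℝ) (hC : 1 < C) (pC : ℝ) (hpC : IsPC C pC) :
    ∃ K : ℝ, 0 < K ∧ ∃ D0 : ℕ, ∀ D : ℕ, D0 ≤ D → ∃ ℓ0 : ℕ, ∀ ℓ : ℕ, ℓ0 ≤ ℓ →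
      ∀ k : ℕ, k = D ^ 2 * ℓ ^ 2 →
        ∀ r : ℕ, 1 ≤ r → (r : ℝ) ≤ C * ℓ →
          ∀ x : Fin r → Amb k, (∀ i, ‖x i‖ = 1) →
            IsPerfect (alphaC C pC * Real.sqrt ℓ / Real.sqrt k) x →
            ∀ v : Fin r → Amb k,
              (∀ i, v i ∈ Submodule.span ℝ (Set.range x)) →
              (∀ i j, ⟪v i, x j⟫ = if i = j then (1 : ℝ) else 0) →
              ∀ e : Fin r → Amb k,
                (∀ i, e i ∈ Submodule.span ℝ (x '' {j | j ≤ i})) →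
                (∀ i j, j < i → ⟪x j, e i⟫ = 0) →
                (∀ i, ‖e i‖ = 1) →
                (∀ i, 0 < ⟪x i, e i⟫) →
                ∀ i, |⟪v i, e i⟫ - 1| ≤ K * ℓ / k ∧
                  ‖(Submodule.orthogonalProjectionOnto
                      (Submodule.span ℝ (v '' {j | j ≠ i})) (e i) : Amb k)‖
                    ≤ K * Real.sqrt ℓ / Real.sqrt k :=
  dist_e_v_general C pC
end
end
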